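/- arXiv:1708.04089 — 7 statements merged into one kernel-verified Lean document; each statement's English description precedes it below -/
import Mathlib

section
/- If X, Y ∈ M(K) and there exist indices l, j such that |(X mod m_l − X mod m_j) − (Y mod m_l − Y mod m_j)| ≥ m_l, then K ≥ m_l. -/
/-- If `X, Y ∈ 𝓜(K)` and for some indices `l, j` we have
`|(X mod m_l − X mod m_j) − (Y mod m_l − Y mod m_j)| ≥ m_l`, then `K ≥ m_l`. -/
theorem dynamicRange_ge_of_large_shift (L : ℕ) (m : Fin L → ℤ) (hm : ∀ l, 0 < m l)
    (K : ℤ) (hK : 0 < K) (X Y : ℤ)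
    (hX : 0 ≤ X ∧ X ≤ K ∧ ∃ l, m l ∣ X)
    (hY : 0 ≤ Y ∧ Y ≤ K ∧ ∃ l, m l ∣ Y)
    (l j : Fin L)
    (h : m l ≤ |(X % m l - X % m j) - (Y % m l - Y % m j)|) :
    m l ≤ K := by
  by_contra hlt
  push_neg at hlt
  obtain ⟨hX0, hXK, -⟩ := hX
  obtain ⟨hY0, hYK, -⟩ := hY
  have hXl : X % m l = X := Int.emod_eq_of_lt hX0 (lt_of_le_of_lt hXK hlt)
  have hYl : Y % m l = Y := Int.emod_eq_of_lt hY0 (lt_of_le_of_lt hYK hlt)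
  rw [hXl, hYl] at h
  have hA0 : 0 ≤ X - X % m j := by
    have : X - X % m j = m j * (X / m j) := by
      rw [Int.emod_def]; ring
    rw [this]
    exact mul_nonneg (hm j).le (Int.ediv_nonneg hX0 (hm j).le)
  have hB0 : 0 ≤ Y - Y % m j := by
    have : Y - Y % m j = m j * (Y / m j) := by
      rw [Int.emod_def]; ring
    rw [this]
    exact mul_nonneg (hm j).le (Int.ediv_nonneg hY0 (hm j).le)
  have hAK : X - X % m j ≤ K := by
    have := Int.emod_nonneg X (hm j).ne'
    linarith
  have hBK : Y - Y % m j ≤ K := by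
    have := Int.emod_nonneg Y (hm j).ne'
    linarith
  have habs : |(X - X % m j) - (Y - Y % m j)| ≤ K := abs_le.2 ⟨by linarith, by linarith⟩
  linarith
end

section
/- The minimum of ρ(x, y) over distinct pairs X, Y ∈ M(K) equals the minimum of ρ(x, 0) over nonzero X ∈ M(K); that is, min_{X,Y ∈ M(K), X≠Y} ρ(x, y) = min_{X ∈ M(K), X > 0} ρ(x, 0). -/
/-- The shift pseudo-metric on residue vectors of integers. -/
def shiftRho (L : ℕ) (m : Fin L → ℤ) (X Y : ℤ) : ℕ :=
  Finset.sup (Finset.univ.filter fun p : Fin L × Fin L => p.1 < p.2)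
    (fun p => ((X % m p.1 - X % m p.2) - (Y % m p.1 - Y % m p.2)).natAbs)

lemma shiftRho_comm (L : ℕ) (m : Fin L → ℤ) (X Y : ℤ) :
    shiftRho L m X Y = shiftRho L m Y X := by
  unfold shiftRho
  refine Finset.sup_congr rfl fun p _ => ?_
  rw [← Int.natAbs_neg]
  congr 1
  ring

lemma shiftRho_key (L : ℕ) (m : Fin L → ℤ) (hm : ∀ l, 0 < m l) (X Y : ℤ)
    (hY : 0 ≤ Y) (hXY : Y < X) (a : Fin L) (ha : m a ∣ X) :
    ∃ Z : ℤ, 0 < Z ∧ Z ≤ X ∧ (∃ l, m l ∣ Z) ∧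
      shiftRho L m Z 0 ≤ shiftRho L m X Y := by
  set f : Fin L → ℤ := fun l => m l * (X / m l) - m l * (Y / m l) with hf
  obtain ⟨c, -, hc⟩ := Finset.exists_max_image Finset.univ f ⟨a, Finset.mem_univ a⟩
  have hc' : ∀ l, f l ≤ f c := fun l => hc l (Finset.mem_univ l)
  set R := shiftRho L m X Y with hR
  -- basic emod facts
  have hemod : ∀ (W : ℤ) (l : Fin L), W % m l = W - m l * (W / m l) :=
    fun W l => Int.emod_def W (m l)
  have hemod_nonneg : ∀ (W : ℤ) (l : Fin L), 0 ≤ W % m l :=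
    fun W l => Int.emod_nonneg W (ne_of_gt (hm l))
  -- f a ≥ X - Y > 0
  have hfa : X - Y ≤ f a := by
    have h1 : m a * (X / m a) = X := Int.mul_ediv_cancel' ha
    have h2 : m a * (Y / m a) ≤ Y := by
      have := hemod Y a; have := hemod_nonneg Y a; linarith
    simp only [hf]; linarith
  have hZpos : 0 < f c := lt_of_lt_of_le (by linarith) (le_trans hfa (hc' a))
  -- f c ≤ X
  have hZleX : f c ≤ X := by
    have h1 : m c * (X / m c) ≤ X := by
      have := hemod X c; have := hemod_nonneg X c; linarith
    have h2 : 0 ≤ m c * (Y / m c) :=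
      mul_nonneg (hm c).le (Int.ediv_nonneg hY (hm c).le)
    simp only [hf]; linarith
  -- key bound : f c - f l ≤ R for all l
  have hkey : ∀ l, f c - f l ≤ (R : ℤ) := by
    intro l
    rcases eq_or_ne l c with rfl | hne
    · simp
    have hterm : ∀ (p : Fin L × Fin L), p.1 < p.2 →
        ((X % m p.1 - X % m p.2) - (Y % m p.1 - Y % m p.2)).natAbs ≤ R := by
      intro p hp
      exact Finset.le_sup (f := fun p : Fin L × Fin L =>
        ((X % m p.1 - X % m p.2) - (Y % m p.1 - Y % m p.2)).natAbs)
        (Finset.mem_filter.mpr ⟨Finset.mem_univ p, hp⟩)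
    have hdiff : ∀ (u v : Fin L),
        (X % m u - X % m v) - (Y % m u - Y % m v) = f v - f u := by
      intro u v
      rw [hemod X u, hemod X v, hemod Y u, hemod Y v]
      simp only [hf]; ring
    rcases lt_or_gt_of_ne hne with h | h
    · have := hterm (l, c) h
      rw [hdiff l c] at this
      omega
    · have := hterm (c, l) h
      rw [hdiff c l] at this
      omega
  -- Z % m l ≤ R for all l
  have hmod : ∀ l, f c % m l ≤ (R : ℤ) := by
    intro l
    have hfl : 0 ≤ X / m l - Y / m l := by
      have := Int.ediv_le_ediv (hm l) hXY.le
      linarith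
    have hfl' : (X / m l - Y / m l) * m l = f l := by simp only [hf]; ring
    have hq : X / m l - Y / m l ≤ f c / m l := by
      rw [Int.le_ediv_iff_mul_le (hm l), hfl']
      exact hc' l
    have h2 : f l ≤ m l * (f c / m l) := by
      rw [← hfl']
      calc (X / m l - Y / m l) * m l ≤ (f c / m l) * m l :=
            mul_le_mul_of_nonneg_right hq (hm l).le
        _ = m l * (f c / m l) := mul_comm _ _
    have := hemod (f c) l
    have := hkey l
    linarith
  refine ⟨f c, hZpos, hZleX, ⟨c, ?_⟩, ?_⟩
  · exact dvd_sub (Dvd.intro _ rfl) (Dvd.intro _ rfl)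
  · unfold shiftRho
    apply Finset.sup_le
    intro p hp
    have h1 := hmod p.1
    have h2 := hmod p.2
    have h3 := hemod_nonneg (f c) p.1
    have h4 := hemod_nonneg (f c) p.2
    rw [Int.zero_emod, Int.zero_emod]
    omega

/-- The minimum of `ρ(x, y)` over distinct pairs `X, Y ∈ 𝓜(K)` equals the
minimum of `ρ(x, 0)` over nonzero `X ∈ 𝓜(K)`. -/
theorem min_shiftRho_pairs_eq_min_to_zero (L : ℕ) (m : Fin L → ℤ)
    (hm : ∀ l, 0 < m l) (K : ℤ) (hK : ∃ l, m l ≤ K ∧ ∀ l', m l ≤ m l') :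
    sInf {n : ℕ | ∃ X Y : ℤ, (0 ≤ X ∧ X ≤ K ∧ ∃ l, m l ∣ X) ∧
        (0 ≤ Y ∧ Y ≤ K ∧ ∃ l, m l ∣ Y) ∧ X ≠ Y ∧ n = shiftRho L m X Y}
      = sInf {n : ℕ | ∃ X : ℤ, 0 < X ∧ X ≤ K ∧ (∃ l, m l ∣ X) ∧
        n = shiftRho L m X 0} := by
  obtain ⟨l₀, hl₀K, -⟩ := hK
  set A := {n : ℕ | ∃ X Y : ℤ, (0 ≤ X ∧ X ≤ K ∧ ∃ l, m l ∣ X) ∧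
      (0 ≤ Y ∧ Y ≤ K ∧ ∃ l, m l ∣ Y) ∧ X ≠ Y ∧ n = shiftRho L m X Y} with hA
  set B := {n : ℕ | ∃ X : ℤ, 0 < X ∧ X ≤ K ∧ (∃ l, m l ∣ X) ∧
      n = shiftRho L m X 0} with hB
  have hBne : B.Nonempty :=
    ⟨shiftRho L m (m l₀) 0, m l₀, hm l₀, hl₀K, ⟨l₀, dvd_refl _⟩, rfl⟩
  have hBA : B ⊆ A := by
    rintro n ⟨X, hX0, hXK, hXd, rfl⟩
    exact ⟨X, 0, ⟨hX0.le, hXK, hXd⟩,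
      ⟨le_refl 0, le_trans (hm l₀).le hl₀K, ⟨l₀, dvd_zero _⟩⟩, ne_of_gt hX0, rfl⟩
  have hAne : A.Nonempty := hBne.mono hBA
  refine le_antisymm (csInf_le_csInf (OrderBot.bddBelow _) hBne hBA) ?_
  obtain ⟨X, Y, ⟨hX0, hXK, hXd⟩, ⟨hY0, hYK, hYd⟩, hne, hn⟩ := Nat.sInf_mem hAne
  rcases lt_or_gt_of_ne hne with h | h
  · -- X < Y : use key lemma with roles swapped
    obtain ⟨a, ha⟩ := hYd
    obtain ⟨Z, hZ0, hZle, hZd, hZρ⟩ := shiftRho_key L m hm Y X hX0 h a ha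
    refine le_trans (Nat.sInf_le ⟨Z, hZ0, le_trans hZle hYK, hZd, rfl⟩) ?_
    rw [hn, shiftRho_comm L m X Y]
    exact hZρ
  · obtain ⟨a, ha⟩ := hXd
    obtain ⟨Z, hZ0, hZle, hZd, hZρ⟩ := shiftRho_key L m hm X Y hY0 h a ha
    refine le_trans (Nat.sInf_le ⟨Z, hZ0, le_trans hZle hXK, hZd, rfl⟩) ?_
    rw [hn]
    exact hZρ
end

section
/- Let m_0 = min_l m_l and K < lcm(m_1,...,m_L). Then min_{X ∈ M(K), X > 0} max_l (X mod m_l) = min_{m_0 ≤ X ≤ K} max_l (X mod m_l); i.e., the minimum over multiples of moduli of the max-residue equals the minimum over all integers in [m_0, K] of the max-residue. -/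
lemma key_maxres (L : ℕ) (m : Fin L → ℤ) (hm : ∀ l, 0 < m l) (m₀ : ℤ)
    (hm₀mem : ∃ l, m l = m₀) (X : ℤ) (hX : m₀ ≤ X) :
    ∃ Y : ℤ, 0 < Y ∧ Y ≤ X ∧ (∃ l, m l ∣ Y) ∧
      Finset.sup Finset.univ (fun l => (Y % m l).toNat)
        ≤ Finset.sup Finset.univ (fun l => (X % m l).toNat) := by
  obtain ⟨ls, hls⟩ := hm₀mem
  obtain ⟨l₀, -, hl₀⟩ := Finset.exists_min_image Finset.univ (fun l => X % m l)
    ⟨ls, Finset.mem_univ ls⟩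
  set r := X % m l₀ with hr
  have hr0 : 0 ≤ r := Int.emod_nonneg X (ne_of_gt (hm l₀))
  have hrX : r < X := by
    have h1 : r ≤ X % m ls := hl₀ ls (Finset.mem_univ ls)
    have h2 : X % m ls < m ls := Int.emod_lt_of_pos X (hm ls)
    omega
  refine ⟨X - r, by omega, by omega, ⟨l₀, ?_⟩, ?_⟩
  · have := Int.mul_ediv_add_emod X (m l₀)
    exact ⟨X / m l₀, by omega⟩
  · apply Finset.sup_mono_fun
    intro j _
    have hle : r ≤ X % m j := hl₀ j (Finset.mem_univ j)
    have hlt : X % m j < m j := Int.emod_lt_of_pos X (hm j)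
    have hrj : r % m j = r := Int.emod_eq_of_lt hr0 (by omega)
    have : (X - r) % m j = X % m j - r := by
      rw [Int.sub_emod, hrj]
      exact Int.emod_eq_of_lt (by omega) (by omega)
    rw [this]
    omega

/-- With `m₀ = min_l m_l` and `m₀ ≤ K < lcm(m_1, ..., m_L)`, the minimum over
nonzero multiples `X ∈ 𝓜(K)` of `max_l (X mod m_l)` equals the minimum over
all integers `X ∈ [m₀, K]` of `max_l (X mod m_l)`. -/
theorem min_maxres_multiples_eq_min_maxres_all (L : ℕ) (m : Fin L → ℤ)
    (hm : ∀ l, 0 < m l) (m₀ : ℤ) (hm₀le : ∀ l, m₀ ≤ m l) (hm₀mem : ∃ l, m l = m₀)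
    (K : ℤ) (hKlb : m₀ ≤ K)
    (hKub : K < (Finset.univ.lcm (fun l => (m l).natAbs) : ℤ)) :
    sInf {n : ℕ | ∃ X : ℤ, 0 < X ∧ X ≤ K ∧ (∃ l, m l ∣ X) ∧
        n = Finset.sup Finset.univ (fun l => (X % m l).toNat)}
      = sInf {n : ℕ | ∃ X : ℤ, m₀ ≤ X ∧ X ≤ K ∧
        n = Finset.sup Finset.univ (fun l => (X % m l).toNat)} := by
  obtain ⟨ls, hls⟩ := hm₀mem
  have hm₀pos : 0 < m₀ := hls ▸ hm ls
  apply le_antisymm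
  · -- sInf A ≤ sInf B
    have hBne : {n : ℕ | ∃ X : ℤ, m₀ ≤ X ∧ X ≤ K ∧
        n = Finset.sup Finset.univ (fun l => (X % m l).toNat)}.Nonempty :=
      ⟨_, m₀, le_refl _, hKlb, rfl⟩
    obtain ⟨X, hX1, hX2, hX3⟩ := Nat.sInf_mem hBne
    obtain ⟨Y, hY0, hYX, hYdvd, hYle⟩ := key_maxres L m hm m₀ ⟨ls, hls⟩ X hX1
    rw [hX3]
    exact le_trans (Nat.sInf_le ⟨Y, hY0, le_trans hYX hX2, hYdvd, rfl⟩) hYle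
  · -- sInf B ≤ sInf A
    have hAne : {n : ℕ | ∃ X : ℤ, 0 < X ∧ X ≤ K ∧ (∃ l, m l ∣ X) ∧
        n = Finset.sup Finset.univ (fun l => (X % m l).toNat)}.Nonempty :=
      ⟨_, m₀, hm₀pos, hKlb, ⟨ls, hls ▸ dvd_refl _⟩, rfl⟩
    obtain ⟨X, hX0, hXK, ⟨l, hl⟩, hX3⟩ := Nat.sInf_mem hAne
    exact Nat.sInf_le ⟨X, le_trans (hm₀le l) (Int.le_of_dvd hX0 hl), hXK, hX3⟩
end

section
/- Given error bound δ, the maximal dynamic range K is characterized as follows: K is the largest integer such that every integer X with m_0 ≤ X ≤ K satisfies max_l (X mod m_l) ≥ 4δ, where m_0 = min_l m_l. Equivalently, K + 1 is the smallest integer Y > m_0 such that for every l the set {Y − 4δ + 1, ..., Y} contains a multiple of m_l. -/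
private lemma window_iff (m : ℤ) (hm : 0 < m) (X : ℤ) (d : ℕ) (hd : 0 < d) :
    ((X % m).toNat < d) ↔ ∃ Z : ℤ, X - d + 1 ≤ Z ∧ Z ≤ X ∧ m ∣ Z := by
  have hnn : 0 ≤ X % m := Int.emod_nonneg X (ne_of_gt hm)
  constructor
  · intro h
    refine ⟨X - X % m, ?_, by omega, ?_⟩
    · have : X % m < (d : ℤ) := by omega
      omega
    · exact ⟨X / m, by have := Int.mul_ediv_add_emod X m; omega⟩
  · rintro ⟨Z, h1, h2, hdvd⟩
    have hXZ : X % m = (X - Z) % m := by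
      rw [Int.sub_emod, Int.emod_eq_zero_of_dvd hdvd]
      simp [Int.emod_emod_of_dvd]
    have h0 : 0 ≤ X - Z := by omega
    have hle : (X - Z) % m ≤ X - Z := by
      rcases lt_or_ge (X - Z) m with h | h
      · rw [Int.emod_eq_of_lt h0 h]
      · exact le_trans (le_of_lt (Int.emod_lt_of_pos _ hm)) h
    omega

/-- Characterization of the maximal dynamic range `K` for error bound `δ`
(with `d = 4δ` a positive integer): `K` is the largest integer such that every
`X ∈ [m₀, K]` has `max_l (X mod m_l) ≥ 4δ`, if and only if `K + 1` is the
smallest integer `Y ≥ m₀` such that for every `l` the window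
`{Y − 4δ + 1, ..., Y}` contains a multiple of `m_l`. -/
theorem dynamicRange_characterization (L : ℕ) (m : Fin L → ℤ)
    (hm : ∀ l, 0 < m l) (m₀ : ℤ) (hm₀le : ∀ l, m₀ ≤ m l) (hm₀mem : ∃ l, m l = m₀)
    (δ : ℝ) (hδ : 0 < δ) (d : ℕ) (hd : (d : ℝ) = 4 * δ)
    (K : ℤ) (hK : m₀ ≤ K)
    (hKlcm : K + 1 < (Finset.univ.lcm (fun l => (m l).natAbs) : ℤ)) :
    ((∀ X : ℤ, m₀ ≤ X → X ≤ K →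
        d ≤ Finset.sup Finset.univ (fun l => (X % m l).toNat))
      ∧ Finset.sup Finset.univ (fun l => ((K + 1) % m l).toNat) < d)
    ↔ (m₀ ≤ K + 1
      ∧ (∀ l, ∃ Z : ℤ, (K + 1) - d + 1 ≤ Z ∧ Z ≤ K + 1 ∧ m l ∣ Z)
      ∧ ∀ Y : ℤ, m₀ ≤ Y →
          (∀ l, ∃ Z : ℤ, Y - d + 1 ≤ Z ∧ Z ≤ Y ∧ m l ∣ Z) → K + 1 ≤ Y) := by
  have hd0 : 0 < d := by
    by_contra h
    have : d = 0 := by omega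
    rw [this] at hd; simp at hd; linarith
  have key : ∀ X : ℤ,
      (Finset.sup Finset.univ (fun l => (X % m l).toNat) < d ↔
        ∀ l, ∃ Z : ℤ, X - d + 1 ≤ Z ∧ Z ≤ X ∧ m l ∣ Z) := by
    intro X
    rw [Finset.sup_lt_iff (by simpa using hd0)]
    exact forall_congr' fun l => by
      simpa using window_iff (m l) (hm l) X d hd0
  constructor
  · rintro ⟨h1, h2⟩
    refine ⟨by omega, (key (K + 1)).mp h2, ?_⟩
    intro Y hY hwin
    by_contra h
    have hYK : Y ≤ K := by omega
    have := h1 Y hY hYK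
    have hlt := (key Y).mpr hwin
    omega
  · rintro ⟨_, h2, h3⟩
    refine ⟨?_, (key (K + 1)).mpr h2⟩
    intro X hX hXK
    by_contra h
    push_neg at h
    have := h3 X hX ((key X).mp h)
    omega
end

section
/- When all moduli are distinct primes p_1, ..., p_L and δ is given, the dynamic range K equals x − 1 where x is the smallest integer with x ≥ 4δ such that the product p_1·p_2···p_L divides (x − 4δ + 1)(x − 4δ + 2)···(x − 1)·x. -/
/-!
Write `P = p_1 ⋯ p_L`. Since the `p_l` are distinct primes, `P` divides
`y (y - 1) ⋯ (y - d + 1)` exactly when each `p_l` divides one of the factors, i.e. exactly when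
every residue `y mod p_l` is `< d`. So `x` is the least `y ≥ d` all of whose residues are small,
and `K + 1` is the least `y ≥ p_1` with that property. These agree: a `y < p_1` is its own
residue mod `p_1`, so `y ≥ d` forces `y ≥ p_1`; conversely `K`, having a residue `≥ d`, is
itself `≥ d`.
-/

namespace DynamicRange

open Finset

lemma emod_lt_iff_exists_dvd_sub {p : ℤ} (hp : 0 < p) (y : ℤ) (d : ℕ) :
    y % p < d ↔ ∃ i < d, p ∣ y - i := by
  have hnonneg := Int.emod_nonneg y hp.ne'
  constructor
  · intro h
    refine ⟨(y % p).toNat, by omega, ?_⟩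
    rw [Int.toNat_of_nonneg hnonneg]
    exact Int.dvd_self_sub_of_emod_eq rfl
  · rintro ⟨i, hid, hdvd⟩
    rcases lt_or_ge (i : ℤ) p with hip | hpi
    · have hmod : (i : ℤ) % p = y % p := Int.modEq_iff_dvd.mpr hdvd
      rw [← hmod, Int.emod_eq_of_lt (Int.natCast_nonneg i) hip]
      exact_mod_cast hid
    · have := Int.emod_lt_of_pos y hp
      omega

lemma prime_dvd_prod_range_sub_iff {p : ℕ} (hp : p.Prime) (y : ℤ) (d : ℕ) :
    (p : ℤ) ∣ ∏ i ∈ range d, (y - i) ↔ y % p < d := by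
  rw [emod_lt_iff_exists_dvd_sub (by exact_mod_cast hp.pos)]
  constructor
  · intro h
    obtain ⟨i, hi, hdvd⟩ := (Nat.prime_iff_prime_int.mp hp).exists_mem_finset_dvd h
    exact ⟨i, mem_range.mp hi, hdvd⟩
  · rintro ⟨i, hi, hdvd⟩
    exact hdvd.trans (dvd_prod_of_mem _ (mem_range.mpr hi))

lemma prod_primes_dvd_prod_range_sub_iff {ι : Type*} [Fintype ι] {p : ι → ℕ}
    (hp : ∀ l, (p l).Prime) (hinj : Function.Injective p) (y : ℤ) (d : ℕ) :
    (∏ l, (p l : ℤ)) ∣ ∏ i ∈ range d, (y - i) ↔ ∀ l, y % p l < d := by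
  simp only [← prime_dvd_prod_range_sub_iff (hp _)]
  refine ⟨fun h l => (dvd_prod_of_mem _ (mem_univ l)).trans h, fun h => ?_⟩
  refine prod_dvd_of_coprime (fun i _ j _ hij => ?_) fun l _ => h l
  exact Nat.isCoprime_iff_coprime.mpr ((Nat.coprime_primes (hp i) (hp j)).mpr (hinj.ne hij))

lemma sup_toNat_emod_lt_iff {ι : Type*} [Fintype ι] [Nonempty ι] {p : ι → ℕ}
    (hp : ∀ l, 0 < p l) (X : ℤ) (d : ℕ) :
    univ.sup (fun l => (X % (p l : ℤ)).toNat) < d ↔ ∀ l, X % p l < d := by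
  rw [← sup'_eq_sup univ_nonempty, sup'_lt_iff]
  simp only [mem_univ, true_implies]
  exact forall_congr' fun l => Int.toNat_lt (Int.emod_nonneg X (by exact_mod_cast (hp l).ne'))

lemma emod_le_self_of_nonneg {a : ℤ} (ha : 0 ≤ a) {b : ℤ} (hb : 0 < b) : a % b ≤ a := by
  have := Int.emod_add_mul_ediv a b
  have := Int.ediv_nonneg ha hb.le
  nlinarith

end DynamicRange

open DynamicRange in
theorem dynamicRange_eq_prime_product_characterization_general (L : ℕ) [NeZero L]
    (p : Fin L → ℕ) (hp : ∀ l, (p l).Prime) (hmono : StrictMono p)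
    (d : ℕ)
    (K : ℤ) (hKge : (p 0 : ℤ) ≤ K)
    (hK : ∀ X : ℤ, (p 0 : ℤ) ≤ X → X ≤ K →
        d ≤ Finset.sup Finset.univ (fun l => (X % (p l : ℤ)).toNat))
    (hKmax : Finset.sup Finset.univ (fun l => ((K + 1) % (p l : ℤ)).toNat) < d)
    (x : ℤ) (hxd : (d : ℤ) ≤ x)
    (hxdvd : (∏ l, (p l : ℤ)) ∣ ∏ i ∈ Finset.range d, (x - (i : ℤ)))
    (hxmin : ∀ y : ℤ, (d : ℤ) ≤ y →
        (∏ l, (p l : ℤ)) ∣ (∏ i ∈ Finset.range d, (y - (i : ℤ))) → x ≤ y) :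
    K = x - 1 := by
  have hpos : ∀ l, 0 < p l := fun l => (hp l).pos
  have hdvd_iff := fun y => prod_primes_dvd_prod_range_sub_iff hp hmono.injective y d
  have hgap : ∀ X, (p 0 : ℤ) ≤ X → X ≤ K → ∃ l, (d : ℤ) ≤ X % p l := fun X h₀ h₁ => by
    have h := hK X h₀ h₁
    rw [← not_lt, sup_toNat_emod_lt_iff hpos] at h
    simpa only [not_forall, not_lt] using h
  have hdK : (d : ℤ) ≤ K := by
    obtain ⟨l, hl⟩ := hgap K hKge le_rfl
    exact hl.trans (emod_le_self_of_nonneg (by omega) (by exact_mod_cast hpos l))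
  have hxK : x ≤ K + 1 :=
    hxmin _ (by omega) ((hdvd_iff _).2 ((sup_toNat_emod_lt_iff hpos _ _).1 hKmax))
  have hxsmall := (hdvd_iff x).1 hxdvd
  have hp0x : (p 0 : ℤ) ≤ x := by
    by_contra! h
    have := hxsmall 0
    rw [Int.emod_eq_of_lt (by omega) h] at this
    omega
  have hKx : ¬ x ≤ K := fun h => by
    obtain ⟨l, hl⟩ := hgap x hp0x h
    exact (hxsmall l).not_ge hl
  omega

/-- When the moduli are distinct primes `p_1 < ... < p_L`, the dynamic range `K`
(the largest integer such that every `X ∈ [p_1, K]` has some residue `≥ 4δ`)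
equals `x − 1`, where `x` is the smallest integer with `x ≥ 4δ` such that
`p_1 p_2 ⋯ p_L` divides `(x − 4δ + 1)(x − 4δ + 2) ⋯ (x − 1) x`. -/
theorem dynamicRange_eq_prime_product_characterization (L : ℕ) [NeZero L]
    (p : Fin L → ℕ) (hp : ∀ l, (p l).Prime) (hmono : StrictMono p)
    (d : ℕ) (hd : 0 < d)
    (K : ℤ) (hKge : (p 0 : ℤ) ≤ K)
    (hK : ∀ X : ℤ, (p 0 : ℤ) ≤ X → X ≤ K →
        d ≤ Finset.sup Finset.univ (fun l => (X % (p l : ℤ)).toNat))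
    (hKmax : Finset.sup Finset.univ (fun l => ((K + 1) % (p l : ℤ)).toNat) < d)
    (x : ℤ) (hxd : (d : ℤ) ≤ x)
    (hxdvd : (∏ l, (p l : ℤ)) ∣ ∏ i ∈ Finset.range d, (x - (i : ℤ)))
    (hxmin : ∀ y : ℤ, (d : ℤ) ≤ y →
        (∏ l, (p l : ℤ)) ∣ (∏ i ∈ Finset.range d, (y - (i : ℤ))) → x ≤ y) :
    K = x - 1 :=
  dynamicRange_eq_prime_product_characterization_general L p hp hmono d K hKge hK hKmax x hxd hxdvd
    hxmin
end

section
/- Let X_1, ..., X_N be integers with common residues r^c_i = X_i mod Γ, and suppose each of κ ≤ NL values γ_1 ≤ ... ≤ γ_κ in [0, Γ) lies within distance δ (in the circular metric d_Γ) of some r^c_i, where 4Nδ < Γ. Then there exists an index ξ ∈ {1, ..., κ} such that γ_{(ξ mod κ)+1} − γ_ξ + Γ·[ξ = κ] > 2δ (i.e., some circular gap between consecutive γ's exceeds 2δ). -/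
/-- Circular distance modulo `Γ`: `d_Γ(X, Y) = min_k |X − Y + kΓ|`. -/
def circDist (Γ X Y : ℤ) : ℤ :=
  min ((X - Y) % Γ) (Γ - (X - Y) % Γ)

lemma circDist_eq_abs (Γ X Y : ℤ) (hΓ : 0 < Γ) :
    ∃ m : ℤ, circDist Γ X Y = |X - Y + m * Γ| := by
  have h0 : 0 ≤ (X - Y) % Γ := Int.emod_nonneg _ (ne_of_gt hΓ)
  have h1 : (X - Y) % Γ < Γ := Int.emod_lt_of_pos _ hΓ
  have he : (X - Y) % Γ = X - Y - Γ * ((X - Y) / Γ) := Int.emod_def _ _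
  rcases le_total ((X - Y) % Γ) (Γ - (X - Y) % Γ) with h | h
  · refine ⟨-((X - Y) / Γ), ?_⟩
    rw [circDist, min_eq_left h,
      show X - Y + -((X - Y) / Γ) * Γ = (X - Y) % Γ by rw [he]; ring,
      abs_of_nonneg h0]
  · refine ⟨-((X - Y) / Γ) - 1, ?_⟩
    rw [circDist, min_eq_right h,
      show X - Y + (-((X - Y) / Γ) - 1) * Γ = (X - Y) % Γ - Γ by rw [he]; ring,
      abs_of_nonpos (by omega)]
    ring

/-- Existence of a large circular gap among the erroneous common residues:
if each `γ_j` lies within circular distance `δ` of some common residue `r^c_i`,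
`4Nδ < Γ`, and the `γ_j` are sorted in `[0, Γ)`, then some circular gap between
consecutive `γ`'s exceeds `2δ`:
`γ_{⟨ξ+1⟩_κ} − γ_ξ + Γ·𝟙(ξ = κ) > 2δ`. -/
theorem exists_large_gap (Γ : ℤ) (hΓ : 0 < Γ) (N L κ : ℕ) [NeZero κ]
    (hN : 0 < N) (hκ : κ ≤ N * L) (δ : ℝ) (hδ : 0 < δ)
    (hNδ : 4 * (N : ℝ) * δ < (Γ : ℝ))
    (rc : Fin N → ℤ) (hrc : ∀ i, 0 ≤ rc i ∧ rc i < Γ)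
    (γ : Fin κ → ℤ) (hγ : ∀ j, 0 ≤ γ j ∧ γ j < Γ) (hsorted : Monotone γ)
    (hcover : ∀ j, ∃ i, ((circDist Γ (γ j) (rc i) : ℤ) : ℝ) ≤ δ) :
    ∃ ξ : Fin κ,
      2 * δ < ((γ (ξ + 1) - γ ξ : ℤ) : ℝ)
        + (if ξ.val = κ - 1 then (Γ : ℝ) else 0) := by
  classical
  have hκpos : 0 < κ := Nat.pos_of_ne_zero (NeZero.ne κ)
  have hΓR : (0:ℝ) < (Γ:ℝ) := by exact_mod_cast hΓ
  set ρ : Fin N → ℤ := rc ∘ Tuple.sort rc with hρdef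
  have hmono : Monotone ρ := Tuple.monotone_sort rc
  have hρrange : ∀ k, 0 ≤ ρ k ∧ ρ k < Γ := fun k => hrc _
  have hρsurj : ∀ i, ∃ k : Fin N, ρ k = rc i :=
    fun i => ⟨(Tuple.sort rc)⁻¹ i, by simp [hρdef]⟩
  have hlastlt : N - 1 < N := by omega
  -- Step A: find a big gap between consecutive sorted residues
  have hgap : (4*δ < ((ρ ⟨0,hN⟩ : ℤ):ℝ) + Γ - ((ρ ⟨N-1, hlastlt⟩ : ℤ):ℝ)) ∨
      ∃ k l : Fin N, l.val = k.val + 1 ∧ 4*δ < ((ρ l : ℤ):ℝ) - ((ρ k : ℤ):ℝ) := by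
    by_contra hA
    push_neg at hA
    obtain ⟨h1, h2⟩ := hA
    have tele : ∀ n : ℕ, ∀ hn : n < N,
        ((ρ ⟨n,hn⟩ : ℤ):ℝ) ≤ ((ρ ⟨0,hN⟩ : ℤ):ℝ) + n * (4*δ) := by
      intro n
      induction n with
      | zero => intro hn; simp
      | succ m ih =>
        intro hn
        have hm : m < N := by omega
        have hstep := h2 ⟨m,hm⟩ ⟨m+1,hn⟩ rfl
        have hih := ih hm
        push_cast at hih ⊢
        push_cast at hstep
        linarith
    have hmain := tele (N-1) hlastlt
    have hN1 : ((N-1:ℕ):ℝ) = (N:ℝ) - 1 := by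
      rw [Nat.cast_sub (by omega)]; norm_num
    rw [hN1] at hmain
    linarith
  have stepA : ∃ a b : ℤ, 0 ≤ a ∧ 4*δ < (b:ℝ) - (a:ℝ) ∧
      (∀ i, rc i ≤ a ∨ b ≤ rc i) ∧ (∀ i, b ≤ rc i + Γ) := by
    rcases hgap with h | ⟨k, l, hkl, h⟩
    · refine ⟨ρ ⟨N-1,hlastlt⟩, ρ ⟨0,hN⟩ + Γ, (hρrange _).1, by push_cast; linarith, ?_, ?_⟩
      · intro i
        left
        obtain ⟨m, hm⟩ := hρsurj i
        rw [← hm]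
        exact hmono (show m ≤ ⟨N-1,hlastlt⟩ by
          rw [Fin.le_def]; exact Nat.le_sub_one_of_lt m.2)
      · intro i
        obtain ⟨m, hm⟩ := hρsurj i
        rw [← hm]
        have := hmono (show (⟨0,hN⟩ : Fin N) ≤ m by rw [Fin.le_def]; exact Nat.zero_le _)
        omega
    · refine ⟨ρ k, ρ l, (hρrange _).1, by push_cast at h ⊢; linarith, ?_, ?_⟩
      · intro i
        obtain ⟨m, hm⟩ := hρsurj i
        rcases le_or_gt m.val k.val with hc | hc
        · left; rw [← hm]; exact hmono (by rw [Fin.le_def]; exact hc)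
        · right; rw [← hm]; exact hmono (show l ≤ m by rw [Fin.le_def]; omega)
      · intro i
        have := (hρrange l).2
        have := (hrc i).1
        omega
  obtain ⟨a, b, ha0, hab, h1, h2⟩ := stepA
  -- all integer shifts of the residues avoid the open interval (a, b)
  have houtk : ∀ (i : Fin N) (k : ℤ), rc i + k*Γ ≤ a ∨ b ≤ rc i + k*Γ := by
    intro i k
    rcases lt_trichotomy k 0 with hk | hk | hk
    · left
      have h' : k * Γ ≤ -1 * Γ := mul_le_mul_of_nonneg_right (by omega) hΓ.le
      have := (hrc i).2
      linarith
    · subst hk; simpa using h1 i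
    · right
      have h' : Γ ≤ k * Γ := le_mul_of_one_le_left hΓ.le (by omega)
      have := h2 i
      linarith
  -- all integer shifts of the γ's avoid the open interval (a+δ, b−δ)
  have houtγ : ∀ (j : Fin κ) (k : ℤ),
      ((γ j:ℝ) + (k:ℝ)*(Γ:ℝ) ≤ (a:ℝ) + δ) ∨ ((b:ℝ) - δ ≤ (γ j:ℝ) + (k:ℝ)*(Γ:ℝ)) := by
    intro j k
    obtain ⟨i, hi⟩ := hcover j
    obtain ⟨m, hm⟩ := circDist_eq_abs Γ (γ j) (rc i) hΓ
    rw [hm] at hi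
    push_cast at hi
    have hi' := abs_le.mp hi
    rcases houtk i (k - m) with h | h
    · left
      have hc : ((rc i : ℝ) + ((k:ℝ) - (m:ℝ)) * (Γ:ℝ)) ≤ (a:ℝ) := by exact_mod_cast h
      have hexp : ((k:ℝ) - (m:ℝ)) * (Γ:ℝ) = (k:ℝ)*Γ - (m:ℝ)*Γ := by ring
      rw [hexp] at hc
      linarith [hi'.1, hi'.2]
    · right
      have hc : (b:ℝ) ≤ ((rc i : ℝ) + ((k:ℝ) - (m:ℝ)) * (Γ:ℝ)) := by exact_mod_cast h
      have hexp : ((k:ℝ) - (m:ℝ)) * (Γ:ℝ) = (k:ℝ)*Γ - (m:ℝ)*Γ := by ring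
      rw [hexp] at hc
      linarith [hi'.1, hi'.2]
  set c : ℝ := (a:ℝ) + δ with hcdef
  set d : ℝ := (b:ℝ) - δ with hddef
  have hcd : 2*δ < d - c := by rw [hcdef, hddef]; linarith
  set t : ℝ := (c + d)/2 with htdef
  have hct : c < t := by rw [htdef]; linarith
  have htd : t < d := by rw [htdef]; linarith
  set ℓ : ℤ := ⌊t / (Γ:ℝ)⌋ with hldef
  set t' : ℝ := t - (ℓ:ℝ) * Γ with ht'def
  have ht'0 : 0 ≤ t' := by
    have hfl := Int.floor_le (t / (Γ:ℝ))
    have h := mul_le_mul_of_nonneg_right hfl hΓR.le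
    rw [div_mul_cancel₀ _ (ne_of_gt hΓR)] at h
    rw [ht'def]; linarith
  have ht'Γ : t' < Γ := by
    have hfl := Int.lt_floor_add_one (t / (Γ:ℝ))
    have h := mul_lt_mul_of_pos_right hfl hΓR
    rw [div_mul_cancel₀ _ (ne_of_gt hΓR)] at h
    rw [ht'def]
    have : ((ℓ:ℝ) + 1) * Γ = (ℓ:ℝ)*Γ + Γ := by ring
    linarith [this ▸ h]
  set S : Finset (Fin κ) := Finset.univ.filter (fun j => (γ j : ℝ) ≤ t') with hSdef
  by_cases hSe : S.Nonempty
  · set ξ := S.max' hSe with hξdef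
    have hξmem : ξ ∈ S := S.max'_mem hSe
    have hξle : (γ ξ : ℝ) ≤ t' := (Finset.mem_filter.mp hξmem).2
    have hs1 : (γ ξ:ℝ) + (ℓ:ℝ)*Γ ≤ c := by
      rcases houtγ ξ ℓ with h | h
      · exact h
      · exfalso
        have : (γ ξ:ℝ) + (ℓ:ℝ)*Γ ≤ t := by rw [ht'def] at hξle; linarith
        linarith
    by_cases hlast : ξ.val = κ - 1
    · refine ⟨ξ, ?_⟩
      rw [if_pos hlast]
      have hs2 : d ≤ (γ (ξ+1):ℝ) + ((ℓ:ℝ)+1)*Γ := by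
        rcases houtγ (ξ+1) (ℓ+1) with h | h
        · exfalso
          have hγ0 : (0:ℝ) ≤ (γ (ξ+1):ℝ) := by exact_mod_cast (hγ (ξ+1)).1
          push_cast at h
          have hexp : ((ℓ:ℝ)+1)*Γ = (ℓ:ℝ)*Γ + Γ := by ring
          rw [ht'def] at ht'Γ
          nlinarith [hct]
        · push_cast at h
          exact h
      push_cast
      nlinarith [hs1, hs2]
    · refine ⟨ξ, ?_⟩
      rw [if_neg hlast]
      have hvlt : ξ.val + 1 < κ := by have := ξ.2; omega
      have hsucc : (ξ+1).val = ξ.val + 1 := by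
        rw [Fin.val_add, Fin.val_one', Nat.mod_eq_of_lt (show 1 < κ by omega),
          Nat.mod_eq_of_lt hvlt]
      have hnot : t' < (γ (ξ+1) : ℝ) := by
        by_contra hle
        push_neg at hle
        have hmem : (ξ+1) ∈ S := by
          rw [hSdef, Finset.mem_filter]
          exact ⟨Finset.mem_univ _, hle⟩
        have := S.le_max' _ hmem
        rw [← hξdef] at this
        rw [Fin.le_def, hsucc] at this
        omega
      have hs2 : d ≤ (γ (ξ+1):ℝ) + (ℓ:ℝ)*Γ := by
        rcases houtγ (ξ+1) ℓ with h | h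
        · exfalso
          rw [ht'def] at hnot
          linarith
        · exact h
      push_cast
      linarith [hs1, hs2]
  · have hall : ∀ j, t' < (γ j:ℝ) := by
      intro j
      by_contra hle
      push_neg at hle
      exact hSe ⟨j, by rw [hSdef, Finset.mem_filter]; exact ⟨Finset.mem_univ _, hle⟩⟩
    refine ⟨⟨κ-1, by omega⟩, ?_⟩
    have hval : ((⟨κ-1, by omega⟩ : Fin κ)).val = κ - 1 := rfl
    rw [if_pos hval]
    set ξ : Fin κ := ⟨κ-1, by omega⟩ with hξdef
    have hs1 : (γ ξ:ℝ) + ((ℓ:ℝ)-1)*Γ ≤ c := by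
      rcases houtγ ξ (ℓ-1) with h | h
      · push_cast at h; exact h
      · exfalso
        have hγΓ : (γ ξ:ℝ) < Γ := by exact_mod_cast (hγ ξ).2
        push_cast at h
        rw [ht'def] at ht'0
        nlinarith [htd]
    have hs2 : d ≤ (γ (ξ+1):ℝ) + (ℓ:ℝ)*Γ := by
      rcases houtγ (ξ+1) ℓ with h | h
      · exfalso
        have := hall (ξ+1)
        rw [ht'def] at this
        linarith
      · exact h
    push_cast
    nlinarith [hs1, hs2]
end

section
/- Let Z_1 ≤ Z_2 ≤ ... ≤ Z_N be real numbers with Z_1 + ... + Z_N = 0 and Z_N − Z_1 ≤ d. Then for every V ∈ {2, 3, ..., N}, the V-th elementary symmetric polynomial satisfies |e_V(Z_1, ..., Z_N)| ≤ C(N, V) · (d/2)^V, where C(N, V) is the binomial coefficient. -/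
/-!
The `Z i` sum to zero and lie in an interval of length `d`, so by Popoviciu's inequality
`∑ Z i ^ 2 ≤ N (d/2)^2`. For `|z| = r` the cross terms of `∑ |z + Z i|^2` cancel, and AM-GM gives
`|∏ (z + Z i)|^2 ≤ (r^2 + (d/2)^2)^N`. Since `e_V` is the coefficient of `z^(N-V)` in this
polynomial, Cauchy's estimate gives `e_V^2 r^(2(N-V)) ≤ (r^2 + (d/2)^2)^N`. Taking
`r^2 = (d/2)^2 (N-V)/V` and using `(N/V)^V ≤ C(N,V)` and `(N/(N-V))^(N-V) ≤ C(N,V)` gives the bound.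
-/

open Finset Polynomial

theorem Finset.sum_sq_le_card_mul_sq_of_sum_eq_zero {ι : Type*} (s : Finset ι) {f : ι → ℝ}
    {a b : ℝ} (hf : ∀ i ∈ s, f i ∈ Set.Icc a b) (h0 : ∑ i ∈ s, f i = 0) :
    ∑ i ∈ s, f i ^ 2 ≤ #s * ((b - a) / 2) ^ 2 := by
  -- `(f i - a) * (b - f i) ≥ 0`
  calc ∑ i ∈ s, f i ^ 2 ≤ ∑ i ∈ s, ((a + b) * f i - a * b) :=
        sum_le_sum fun i hi => by obtain ⟨hai, hib⟩ := hf i hi; nlinarith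
    _ = #s * -(a * b) := by rw [sum_sub_distrib, ← mul_sum, h0, sum_const, nsmul_eq_mul]; ring
    _ ≤ #s * ((b - a) / 2) ^ 2 := by gcongr; nlinarith [sq_nonneg (a + b)]

theorem Real.prod_le_arith_mean_pow {ι : Type*} (s : Finset ι) {f : ι → ℝ}
    (hf : ∀ i ∈ s, 0 ≤ f i) : ∏ i ∈ s, f i ≤ ((∑ i ∈ s, f i) / #s) ^ #s := by
  rcases s.eq_empty_or_nonempty with rfl | hs
  · simp
  have hcard : (0 : ℝ) < #s := mod_cast hs.card_pos
  have h := Real.geom_mean_le_arith_mean s (fun _ => 1) f (fun _ _ => zero_le_one)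
    (by simpa using hcard) hf
  simp only [Real.rpow_one, one_mul, sum_const, nsmul_one] at h
  calc ∏ i ∈ s, f i = ((∏ i ∈ s, f i) ^ (#s : ℝ)⁻¹) ^ #s := by
        rw [← Real.rpow_natCast, ← Real.rpow_mul (prod_nonneg hf), inv_mul_cancel₀ hcard.ne',
          Real.rpow_one]
    _ ≤ ((∑ i ∈ s, f i) / #s) ^ #s :=
        pow_le_pow_left₀ (Real.rpow_nonneg (prod_nonneg hf) _) h _

theorem Nat.pow_le_choose_mul_pow {n k : ℕ} (h : k ≤ n) : n ^ k ≤ n.choose k * k ^ k := by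
  have key : k.factorial * n ^ k ≤ n.descFactorial k * k ^ k :=
    calc k.factorial * n ^ k = ∏ i ∈ range k, ((k - i) * n) := by
          rw [← Nat.descFactorial_self, Nat.descFactorial_eq_prod_range, prod_mul_distrib,
            prod_const, card_range]
      _ ≤ ∏ i ∈ range k, ((n - i) * k) := prod_le_prod' fun i _ => by
          rw [Nat.sub_mul, Nat.sub_mul, Nat.mul_comm k n]
          exact Nat.sub_le_sub_left (Nat.mul_le_mul_left i h) _
      _ = n.descFactorial k * k ^ k := by
          rw [Nat.descFactorial_eq_prod_range, prod_mul_distrib, prod_const, card_range]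
  rw [Nat.descFactorial_eq_factorial_mul_choose, Nat.mul_assoc] at key
  exact Nat.le_of_mul_le_mul_left key k.factorial_pos

theorem Nat.add_pow_add_le_choose_sq_mul (V K : ℕ) :
    (V + K) ^ (V + K) ≤ (V + K).choose V ^ 2 * (V ^ V * K ^ K) := by
  have hV := Nat.pow_le_choose_mul_pow (Nat.le_add_right V K)
  have hK := Nat.pow_le_choose_mul_pow (Nat.le_add_left K V)
  rw [← Nat.choose_symm_add] at hK
  calc (V + K) ^ (V + K) = (V + K) ^ V * (V + K) ^ K := pow_add _ _ _
    _ ≤ ((V + K).choose V * V ^ V) * ((V + K).choose V * K ^ K) := Nat.mul_le_mul hV hK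
    _ = (V + K).choose V ^ 2 * (V ^ V * K ^ K) := by ring

theorem Polynomial.iter_deriv_eval {𝕜 : Type*} [NontriviallyNormedField 𝕜] (p : 𝕜[X]) (k : ℕ) :
    deriv^[k] (fun z => p.eval z) = fun z => (derivative^[k] p).eval z := by
  induction k generalizing p with
  | zero => rfl
  | succ k ih =>
    have hp : deriv (fun z => p.eval z) = fun z => p.derivative.eval z := by
      ext z; exact p.deriv
    rw [Function.iterate_succ_apply, hp, ih, Function.iterate_succ_apply]

theorem Polynomial.iteratedDeriv_eval_zero {𝕜 : Type*} [NontriviallyNormedField 𝕜] (p : 𝕜[X])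
    (k : ℕ) : iteratedDeriv k (fun z => p.eval z) 0 = k.factorial * p.coeff k := by
  simp only [iteratedDeriv_eq_iterate, iter_deriv_eval]
  rw [← coeff_zero_eq_eval_zero, coeff_iterate_derivative, zero_add, Nat.descFactorial_self,
    nsmul_eq_mul]

theorem Polynomial.norm_coeff_mul_pow_le (p : ℂ[X]) (k : ℕ) {r C : ℝ} (hr : 0 ≤ r)
    (hC : ∀ z : ℂ, ‖z‖ = r → ‖p.eval z‖ ≤ C) : ‖p.coeff k‖ * r ^ k ≤ C := by
  rcases hr.eq_or_lt with rfl | hr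
  · have h0 := hC 0 (by simp)
    rcases k with _ | k
    · simpa [coeff_zero_eq_eval_zero] using h0
    · simpa using (norm_nonneg _).trans h0
  have h := Complex.norm_iteratedDeriv_le_of_forall_mem_sphere_norm_le (c := 0) k hr
    p.differentiable.diffContOnCl fun z hz => hC z (by simpa using hz)
  rw [iteratedDeriv_eval_zero, norm_mul, Complex.norm_natCast, mul_div_assoc] at h
  exact (le_div_iff₀ (pow_pos hr k)).mp (le_of_mul_le_mul_left h (mod_cast k.factorial_pos))

theorem norm_prod_add_sq_le {ι : Type*} [Fintype ι] {Z : ι → ℝ} {s : ℝ} (hsum : ∑ i, Z i = 0)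
    (hsq : ∑ i, Z i ^ 2 ≤ Fintype.card ι * s ^ 2) (z : ℂ) :
    ‖∏ i, (z + Z i)‖ ^ 2 ≤ (‖z‖ ^ 2 + s ^ 2) ^ Fintype.card ι := by
  have hterm (i : ι) : ‖z + Z i‖ ^ 2 = ‖z‖ ^ 2 + 2 * z.re * Z i + Z i ^ 2 := by
    rw [← Complex.normSq_eq_norm_sq, ← Complex.normSq_eq_norm_sq, Complex.normSq_add,
      Complex.normSq_ofReal]
    simp only [Complex.conj_ofReal, Complex.mul_re, Complex.ofReal_re, Complex.ofReal_im, mul_zero,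
      sub_zero]
    ring
  have hmean : ∑ i, ‖z + Z i‖ ^ 2 ≤ (‖z‖ ^ 2 + s ^ 2) * Fintype.card ι := by
    simp only [hterm, sum_add_distrib, ← mul_sum, hsum, sum_const, card_univ, nsmul_eq_mul]
    linarith
  calc ‖∏ i, (z + Z i)‖ ^ 2 = ∏ i, ‖z + Z i‖ ^ 2 := by rw [norm_prod, prod_pow]
    _ ≤ ((∑ i, ‖z + Z i‖ ^ 2) / Fintype.card ι) ^ Fintype.card ι :=
        Real.prod_le_arith_mean_pow univ fun i _ => sq_nonneg _
    _ ≤ (‖z‖ ^ 2 + s ^ 2) ^ Fintype.card ι :=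
        pow_le_pow_left₀ (by positivity) (div_le_of_le_mul₀ (by positivity) (by positivity) hmean) _

theorem sq_esymm_mul_pow_le {ι : Type*} [Fintype ι] {Z : ι → ℝ} {s r : ℝ} {V K : ℕ}
    (hsum : ∑ i, Z i = 0) (hsq : ∑ i, Z i ^ 2 ≤ Fintype.card ι * s ^ 2) (hr : 0 ≤ r)
    (hcard : Fintype.card ι = V + K) :
    (∑ t ∈ univ.powersetCard V, ∏ i ∈ t, Z i) ^ 2 * (r ^ 2) ^ K ≤ (r ^ 2 + s ^ 2) ^ (V + K) := by
  set p : ℂ[X] := ∏ i, (X + C (Z i : ℂ))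
  have hcoeff : p.coeff K = ((∑ t ∈ univ.powersetCard V, ∏ i ∈ t, Z i : ℝ) : ℂ) := by
    rw [Finset.prod_X_add_C_coeff _ _ (by simp [hcard]), card_univ, hcard, Nat.add_sub_cancel]
    push_cast; rfl
  have h := p.norm_coeff_mul_pow_le K hr (C := √((r ^ 2 + s ^ 2) ^ (V + K))) fun z hz => by
    rw [Real.le_sqrt (norm_nonneg _) (by positivity), eval_prod, ← hz, ← hcard]
    simpa using norm_prod_add_sq_le hsum hsq z
  rw [hcoeff, Complex.norm_real, Real.norm_eq_abs,
    Real.le_sqrt (by positivity) (by positivity)] at h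
  calc _ = (|∑ t ∈ univ.powersetCard V, ∏ i ∈ t, Z i| * r ^ K) ^ 2 := by
        rw [mul_pow, sq_abs]; ring
    _ ≤ _ := h

theorem le_choose_sq_mul_pow_of_forall_mul_pow_le {a t : ℝ} {V K : ℕ} (hV : V ≠ 0) (ht : 0 < t)
    (h : ∀ ρ, 0 ≤ ρ → a * ρ ^ K ≤ (ρ + t) ^ (V + K)) :
    a ≤ ((V + K).choose V : ℝ) ^ 2 * t ^ V := by
  have hVpos : (0 : ℝ) < V := by positivity
  have hKK : (0 : ℝ) < (K : ℝ) ^ K := mod_cast Nat.pow_self_pos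
  have hρ := h (t * K / V) (by positivity)
  rw [show t * K / V + t = t * (V + K) / V by field_simp; ring, div_pow, div_pow, mul_pow, mul_pow,
    ← mul_div_assoc, div_le_div_iff₀ (by positivity) (by positivity), pow_add (V : ℝ)] at hρ
  have hbin : ((V + K : ℕ) : ℝ) ^ (V + K) ≤ ((V + K).choose V : ℝ) ^ 2 * (V ^ V * K ^ K) :=
    mod_cast Nat.add_pow_add_le_choose_sq_mul V K
  push_cast at hbin
  refine le_of_mul_le_mul_right ?_ (by positivity : 0 < t ^ K * (K : ℝ) ^ K * (V : ℝ) ^ V * V ^ K)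
  calc a * (t ^ K * K ^ K * V ^ V * V ^ K) = a * (t ^ K * K ^ K) * (V ^ V * V ^ K) := by ring
    _ ≤ t ^ (V + K) * (V + K) ^ (V + K) * V ^ K := hρ
    _ ≤ t ^ (V + K) * ((V + K).choose V ^ 2 * (V ^ V * K ^ K)) * V ^ K := by gcongr
    _ = (V + K).choose V ^ 2 * t ^ V * (t ^ K * K ^ K * V ^ V * V ^ K) := by ring

theorem abs_esymm_le_choose_mul_pow {ι : Type*} [Fintype ι] {Z : ι → ℝ} {s : ℝ} {V : ℕ}
    (hsum : ∑ i, Z i = 0) (hsq : ∑ i, Z i ^ 2 ≤ Fintype.card ι * s ^ 2) (hs : 0 ≤ s) (hV : V ≠ 0)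
    (hVn : V ≤ Fintype.card ι) :
    |∑ t ∈ univ.powersetCard V, ∏ i ∈ t, Z i| ≤ (Fintype.card ι).choose V * s ^ V := by
  obtain ⟨K, hK⟩ := Nat.exists_eq_add_of_le hVn
  rcases hs.eq_or_lt with rfl | hs
  · have hZ (i : ι) : Z i = 0 := by
      have hsq0 : ∑ i, Z i ^ 2 = 0 :=
        le_antisymm (by simpa using hsq) (sum_nonneg fun i _ => sq_nonneg (Z i))
      exact pow_eq_zero_iff two_ne_zero |>.mp
        ((sum_eq_zero_iff_of_nonneg fun i _ => sq_nonneg (Z i)).mp hsq0 i (mem_univ i))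
    have hE : ∑ t ∈ univ.powersetCard V, ∏ i ∈ t, Z i = 0 := sum_eq_zero fun t ht => by
      obtain ⟨i, hi⟩ := card_pos.mp ((mem_powersetCard.mp ht).2 ▸ Nat.pos_of_ne_zero hV)
      exact prod_eq_zero hi (hZ i)
    simp [hE, hV]
  refine abs_le_of_sq_le_sq ?_ (by positivity)
  rw [mul_pow, ← pow_mul, mul_comm V, pow_mul, hK]
  refine le_choose_sq_mul_pow_of_forall_mul_pow_le hV (by positivity) fun ρ hρ => ?_
  simpa [Real.sq_sqrt hρ] using sq_esymm_mul_pow_le hsum hsq (Real.sqrt_nonneg ρ) hK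

open Fin.NatCast in
theorem esymm_bound_of_zero_sum_general (N : ℕ) [NeZero N]
    (d : ℝ) (hd : 0 ≤ d) (Z : Fin N → ℝ) (hsorted : Monotone Z)
    (hsum : ∑ i, Z i = 0) (hrange : Z (Fin.last (N - 1)) - Z 0 ≤ d) :
    ∀ V : ℕ, 2 ≤ V → V ≤ N →
      |∑ t ∈ Finset.univ.powersetCard V, ∏ i ∈ t, Z i|
        ≤ (N.choose V : ℝ) * (d / 2) ^ V := by
  intro V hV hVN
  have hZ (i : Fin N) : Z i ∈ Set.Icc (Z 0) (Z (Fin.last (N - 1))) := by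
    refine ⟨hsorted (Fin.zero_le i), hsorted ?_⟩
    simp only [Fin.le_def, Fin.val_last, Fin.val_natCast, Nat.self_sub_mod]
    omega
  have hsq : ∑ i, Z i ^ 2 ≤ Fintype.card (Fin N) * (d / 2) ^ 2 := by
    refine (univ.sum_sq_le_card_mul_sq_of_sum_eq_zero (fun i _ => hZ i) hsum).trans ?_
    rw [card_univ]
    gcongr
    linarith [(hZ 0).2]
  simpa using abs_esymm_le_choose_mul_pow hsum hsq (by positivity) (by omega) (by simpa using hVN)

open Fin.NatCast in
/-- Bound on elementary symmetric polynomials of zero-sum reals with bounded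
range: if `Z_1 ≤ ... ≤ Z_N`, `Σ Z_i = 0` and `Z_N − Z_1 ≤ d`, then for every
`V ∈ {2, ..., N}`, `|e_V(Z_1, ..., Z_N)| ≤ C(N, V)·(d/2)^V`. -/
theorem esymm_bound_of_zero_sum (N : ℕ) [NeZero N] (hN : 2 ≤ N)
    (d : ℝ) (hd : 0 ≤ d) (Z : Fin N → ℝ) (hsorted : Monotone Z)
    (hsum : ∑ i, Z i = 0) (hrange : Z (Fin.last (N - 1)) - Z 0 ≤ d) :
    ∀ V : ℕ, 2 ≤ V → V ≤ N →
      |∑ t ∈ Finset.univ.powersetCard V, ∏ i ∈ t, Z i|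
        ≤ (N.choose V : ℝ) * (d / 2) ^ V :=
  esymm_bound_of_zero_sum_general N d hd Z hsorted hsum hrange
end
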